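/- arXiv:2305.04230 — 2 statements merged into one kernel-verified Lean document; each statement's English description precedes it below -/
import Mathlib

section
/- Let γ : I → ℝ⁴₂ be a smooth curve with values in AdS³ such that T := γ′ satisfies ⟨T(s),T(s)⟩ = 1 for all s ∈ I (unit-speed spacelike), and suppose ⟨T′(s)−γ(s), T′(s)−γ(s)⟩ ≠ 0 for all s ∈ I. Define κ_g(s) = √|⟨T′(s)−γ(s), T′(s)−γ(s)⟩|, n₁(s) = (T′(s)−γ(s))/κ_g(s), n₂(s) = γ(s)×T(s)×n₁(s), δ = ⟨n₁(s),n₁(s)⟩ (which is constantly 1 or −1), and τ_g(s) = (δ/κ_g(s)²)·det(γ(s), γ′(s), γ″(s), γ‴(s)). Then for all s ∈ I the Frenet–Serret type formulas hold: γ′(s) = T(s), T′(s) = γ(s) + κ_g(s) n₁(s), n₁′(s) = −δ κ_g(s) T(s) + τ_g(s) n₂(s), and n₂′(s) = τ_g(s) n₁(s). -/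
noncomputable section

/-- ℝ⁴ as `Fin 4 → ℝ`, carrying the pseudo-scalar product of index 2. -/
abbrev R4 : Type := Fin 4 → ℝ

/-- ℝ³ as `Fin 3 → ℝ`. -/
abbrev R3 : Type := Fin 3 → ℝ

/-- The pseudo-scalar product ⟨u,w⟩ = −u₁w₁ − u₂w₂ + u₃w₃ + u₄w₄ of ℝ⁴₂. -/
def pip (u w : R4) : ℝ :=
  -(u 0 * w 0) - u 1 * w 1 + u 2 * w 2 + u 3 * w 3

/-- The anti-de Sitter 3-space AdS³ = {u : ⟨u,u⟩ = −1}. -/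
def AdS3 : Set R4 := {u | pip u u = -1}

/-- The 3×3 minor of the rows u,v,w using columns a,b,c. -/
def minor3 (u v w : R4) (a b c : Fin 4) : ℝ :=
  u a * (v b * w c - v c * w b) - u b * (v a * w c - v c * w a)
    + u c * (v a * w b - v b * w a)

/-- The triple product u×v×w in ℝ⁴₂, the formal determinant with first row
(−e₁,−e₂,e₃,e₄). -/
def trip (u v w : R4) : R4 :=
  ![-(minor3 u v w 1 2 3), minor3 u v w 0 2 3, minor3 u v w 0 1 3,
    -(minor3 u v w 0 1 2)]

/-- A pseudo-spherical spacelike framed curve on `I` with sign `ε`. -/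
structure IsFramedCurve (I : Set ℝ) (γ v₁ v₂ : ℝ → R4) (ε : ℝ) : Prop where
  eps : ε = 1 ∨ ε = -1
  smooth_γ : ContDiffOn ℝ (⊤ : ℕ∞) γ I
  smooth_v₁ : ContDiffOn ℝ (⊤ : ℕ∞) v₁ I
  smooth_v₂ : ContDiffOn ℝ (⊤ : ℕ∞) v₂ I
  mem_ads : ∀ s ∈ I, γ s ∈ AdS3
  norm_v₁ : ∀ s ∈ I, pip (v₁ s) (v₁ s) = ε
  norm_v₂ : ∀ s ∈ I, pip (v₂ s) (v₂ s) = -ε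
  orth_v₁v₂ : ∀ s ∈ I, pip (v₁ s) (v₂ s) = 0
  orth_γv₁ : ∀ s ∈ I, pip (γ s) (v₁ s) = 0
  orth_γv₂ : ∀ s ∈ I, pip (γ s) (v₂ s) = 0
  tang_v₁ : ∀ s ∈ I, pip (deriv γ s) (v₁ s) = 0
  tang_v₂ : ∀ s ∈ I, pip (deriv γ s) (v₂ s) = 0

/-- μ(s) = γ(s)×v₁(s)×v₂(s). -/
def muF (γ v₁ v₂ : ℝ → R4) (s : ℝ) : R4 := trip (γ s) (v₁ s) (v₂ s)

/-- α(s) = ⟨γ′(s), μ(s)⟩. -/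
def curvA (γ v₁ v₂ : ℝ → R4) (s : ℝ) : ℝ := pip (deriv γ s) (muF γ v₁ v₂ s)

/-- ℓ(s) = −ε⟨v₁′(s), v₂(s)⟩. -/
def curvL (ε : ℝ) (v₁ v₂ : ℝ → R4) (s : ℝ) : ℝ := -ε * pip (deriv v₁ s) (v₂ s)

/-- m(s) = ⟨v₁′(s), μ(s)⟩. -/
def curvM (γ v₁ v₂ : ℝ → R4) (s : ℝ) : ℝ := pip (deriv v₁ s) (muF γ v₁ v₂ s)

/-- n(s) = ⟨v₂′(s), μ(s)⟩. -/
def curvN (γ v₁ v₂ : ℝ → R4) (s : ℝ) : ℝ := pip (deriv v₂ s) (muF γ v₁ v₂ s)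

/-- The nullcone front NF±(s,λ) = γ(s) + λ(v₁(s) ± v₂(s)), with sign `e = ±1`. -/
def NF (γ v₁ v₂ : ℝ → R4) (e : ℝ) (q : ℝ × ℝ) : R4 :=
  γ q.1 + q.2 • (v₁ q.1 + e • v₂ q.1)

/-- The function σ± of Theorem 4.3, with sign `e = ±1`. -/
def sigmaF (γ v₁ v₂ : ℝ → R4) (ε e : ℝ) (s : ℝ) : ℝ :=
  curvA γ v₁ v₂ s *
      (-(deriv (curvM γ v₁ v₂) s + e * deriv (curvN γ v₁ v₂) s)
        + curvL ε v₁ v₂ s * (curvN γ v₁ v₂ s + e * curvM γ v₁ v₂ s))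
    + deriv (curvA γ v₁ v₂) s * (curvM γ v₁ v₂ s + e * curvN γ v₁ v₂ s)

/-- A point is a singular point of `f : ℝ×ℝ → ℝ⁴₂` when the two partial
derivatives are linearly dependent (the differential has rank < 2). -/
def SingularAt (f : ℝ × ℝ → R4) (q : ℝ × ℝ) : Prop :=
  ¬ LinearIndependent ℝ
      ![deriv (fun t => f (t, q.2)) q.1, deriv (fun l => f (q.1, l)) q.2]

/-- The cuspidal edge model CE(u,v) = (u², u³, v). -/
def CE : ℝ × ℝ → R3 := fun q => ![q.1 ^ 2, q.1 ^ 3, q.2]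

/-- The swallowtail model SW(u,v) = (3u⁴+u²v, 4u³+2uv, v). -/
def SW : ℝ × ℝ → R3 :=
  fun q => ![3 * q.1 ^ 4 + q.1 ^ 2 * q.2, 4 * q.1 ^ 3 + 2 * q.1 * q.2, q.2]

/-- `f` (a map into AdS³) is locally diffeomorphic at `p` to the model `g` at `0`:
there are a smooth diffeomorphism `φ` from a neighborhood `U` of `0` in ℝ² onto a
neighborhood `V` of `p` with `φ 0 = p`, and a smooth diffeomorphism `Ψ` from a
neighborhood `W` of `f p` in the submanifold AdS³ onto an open set `W'` of ℝ³
with `Ψ (f p) = g 0`, such that `Ψ ∘ f ∘ φ = g` near `0`. -/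
def LocallyDiffeoAt (f : ℝ × ℝ → R4) (p : ℝ × ℝ) (g : ℝ × ℝ → R3) : Prop :=
  ∃ (U V : Set (ℝ × ℝ)) (φ φinv : ℝ × ℝ → ℝ × ℝ)
    (W : Set R4) (W' : Set R3) (Ψ : R4 → R3) (Ψinv : R3 → R4),
    IsOpen U ∧ (0 : ℝ × ℝ) ∈ U ∧ IsOpen V ∧ p ∈ V ∧
    ContDiffOn ℝ (⊤ : ℕ∞) φ U ∧ Set.BijOn φ U V ∧ φ 0 = p ∧
    ContDiffOn ℝ (⊤ : ℕ∞) φinv V ∧ (∀ x ∈ U, φinv (φ x) = x) ∧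
    (∃ O : Set R4, IsOpen O ∧ W = O ∩ AdS3) ∧ f p ∈ W ∧ IsOpen W' ∧
    ContDiffOn ℝ (⊤ : ℕ∞) Ψ W ∧ Set.BijOn Ψ W W' ∧ Ψ (f p) = g 0 ∧
    ContDiffOn ℝ (⊤ : ℕ∞) Ψinv W' ∧ (∀ y ∈ W, Ψinv (Ψ y) = y) ∧
    (∀ x ∈ U, f (φ x) ∈ W) ∧ (∀ x ∈ U, Ψ (f (φ x)) = g x)

/-- The anti-de Sitter distance-squared function d_{v₀}(s) = ⟨γ(s)−v₀, γ(s)−v₀⟩. -/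
def dSq (γ : ℝ → R4) (v₀ : R4) (s : ℝ) : ℝ := pip (γ s - v₀) (γ s - v₀)



set_option maxHeartbeats 1600000

namespace FrenetAux

lemma pip_comm (u w : R4) : pip u w = pip w u := by simp only [pip]; ring

lemma pip_smul_left (r : ℝ) (u w : R4) : pip (r • u) w = r * pip u w := by
  simp only [pip, Pi.smul_apply, smul_eq_mul]; ring

lemma pip_smul_right (r : ℝ) (u w : R4) : pip u (r • w) = r * pip u w := by
  simp only [pip, Pi.smul_apply, smul_eq_mul]; ring

lemma pip_add_left (u v w : R4) : pip (u + v) w = pip u w + pip v w := by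
  simp only [pip, Pi.add_apply]; ring

lemma pip_add_right (u v w : R4) : pip u (v + w) = pip u v + pip u w := by
  simp only [pip, Pi.add_apply]; ring

lemma pip_sub_left (u v w : R4) : pip (u - v) w = pip u w - pip v w := by
  simp only [pip, Pi.sub_apply]; ring

lemma pip_sub_right (u v w : R4) : pip u (v - w) = pip u v - pip u w := by
  simp only [pip, Pi.sub_apply]; ring

lemma trip_self12 (u w : R4) : trip u u w = 0 := by
  funext i; fin_cases i <;> simp [trip, minor3] <;> ring

lemma trip_self13 (u v : R4) : trip u v u = 0 := by
  funext i; fin_cases i <;> simp [trip, minor3] <;> ring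

lemma trip_self23 (u v : R4) : trip u v v = 0 := by
  funext i; fin_cases i <;> simp [trip, minor3] <;> ring

lemma trip_add2 (u v v' w : R4) : trip u (v + v') w = trip u v w + trip u v' w := by
  funext i; fin_cases i <;> simp [trip, minor3] <;> ring

lemma trip_add3 (u v w w' : R4) : trip u v (w + w') = trip u v w + trip u v w' := by
  funext i; fin_cases i <;> simp [trip, minor3] <;> ring

lemma trip_sub3 (u v w w' : R4) : trip u v (w - w') = trip u v w - trip u v w' := by
  funext i; fin_cases i <;> simp [trip, minor3] <;> ring

lemma trip_smul2 (r : ℝ) (u v w : R4) : trip u (r • v) w = r • trip u v w := by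
  funext i; fin_cases i <;> simp [trip, minor3] <;> ring

lemma trip_smul3 (r : ℝ) (u v w : R4) : trip u v (r • w) = r • trip u v w := by
  funext i; fin_cases i <;> simp [trip, minor3] <;> ring

lemma pip_trip1 (u v w : R4) : pip (trip u v w) u = 0 := by
  simp [pip, trip, minor3]; ring

lemma pip_trip2 (u v w : R4) : pip (trip u v w) v = 0 := by
  simp [pip, trip, minor3]; ring

lemma pip_trip3 (u v w : R4) : pip (trip u v w) w = 0 := by
  simp [pip, trip, minor3]; ring

lemma pip_trip_swap (u v w x : R4) : pip (trip u v w) x = -pip (trip u v x) w := by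
  simp [pip, trip, minor3]; ring

lemma pip_trip_lagrange (u v w : R4) :
    pip (trip u v w) (trip u v w) =
      pip u u * (pip v v * pip w w - pip v w ^ 2)
        - pip u v * (pip u v * pip w w - pip v w * pip u w)
        + pip u w * (pip u v * pip v w - pip v v * pip u w) := by
  simp [pip, trip, minor3]; ring

lemma det_eq_neg_pip_trip (a b c d : R4) :
    Matrix.det (Matrix.of ![a, b, c, d]) = -pip (trip a b c) d := by
  simp [Matrix.det_succ_row_zero, Fin.sum_univ_succ, Matrix.det_fin_three,
    Fin.succAbove, pip, trip, minor3,
    show Fin.succ (2 : Fin 3) = (3 : Fin 4) from rfl,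
    show Fin.succ (1 : Fin 3) = (2 : Fin 4) from rfl,
    show Fin.succ (0 : Fin 3) = (1 : Fin 4) from rfl,
    show Fin.castSucc (2 : Fin 3) = (2 : Fin 4) from rfl,
    show Fin.castSucc (1 : Fin 3) = (1 : Fin 4) from rfl,
    show Fin.castSucc (0 : Fin 3) = (0 : Fin 4) from rfl]
  ring

lemma hasDerivAt_pip {f g : ℝ → R4} {f' g' : R4} {s : ℝ}
    (hf : HasDerivAt f f' s) (hg : HasDerivAt g g' s) :
    HasDerivAt (fun t => pip (f t) (g t)) (pip f' (g s) + pip (f s) g') s := by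
  have hfi := hasDerivAt_pi.mp hf
  have hgi := hasDerivAt_pi.mp hg
  have h := ((((hfi 0).mul (hgi 0)).neg.sub ((hfi 1).mul (hgi 1))).add
      ((hfi 2).mul (hgi 2))).add ((hfi 3).mul (hgi 3))
  have hv : pip f' (g s) + pip (f s) g' =
      -(f' 0 * g s 0 + f s 0 * g' 0) - (f' 1 * g s 1 + f s 1 * g' 1)
        + (f' 2 * g s 2 + f s 2 * g' 2) + (f' 3 * g s 3 + f s 3 * g' 3) := by
    simp [pip]; ring
  rw [show (fun t => pip (f t) (g t)) = fun t =>
      -(f t 0 * g t 0) - f t 1 * g t 1 + f t 2 * g t 2 + f t 3 * g t 3 from rfl, hv]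
  exact h

lemma hasDerivAt_trip {u v w : ℝ → R4} {u' v' w' : R4} {s : ℝ}
    (hu : HasDerivAt u u' s) (hv : HasDerivAt v v' s) (hw : HasDerivAt w w' s) :
    HasDerivAt (fun t => trip (u t) (v t) (w t))
      (trip u' (v s) (w s) + trip (u s) v' (w s) + trip (u s) (v s) w') s := by
  have hui := hasDerivAt_pi.mp hu
  have hvi := hasDerivAt_pi.mp hv
  have hwi := hasDerivAt_pi.mp hw
  rw [hasDerivAt_pi]
  intro i
  have m : ∀ (a b c : Fin 4), HasDerivAt (fun t => minor3 (u t) (v t) (w t) a b c)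
      (minor3 u' (v s) (w s) a b c + minor3 (u s) v' (w s) a b c
        + minor3 (u s) (v s) w' a b c) s := by
    intro a b c
    have h := (((hui a).mul (((hvi b).mul (hwi c)).sub ((hvi c).mul (hwi b)))).sub
        ((hui b).mul (((hvi a).mul (hwi c)).sub ((hvi c).mul (hwi a))))).add
        ((hui c).mul (((hvi a).mul (hwi b)).sub ((hvi b).mul (hwi a))))
    have hv : minor3 u' (v s) (w s) a b c + minor3 (u s) v' (w s) a b c
        + minor3 (u s) (v s) w' a b c =
        u' a * (v s b * w s c - v s c * w s b) + u s a * ((v' b * w s c + v s b * w' c) - (v' c * w s b + v s c * w' b))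
          - (u' b * (v s a * w s c - v s c * w s a) + u s b * ((v' a * w s c + v s a * w' c) - (v' c * w s a + v s c * w' a)))
          + (u' c * (v s a * w s b - v s b * w s a) + u s c * ((v' a * w s b + v s a * w' b) - (v' b * w s a + v s b * w' a))) := by
      simp [minor3]; ring
    rw [show (fun t => minor3 (u t) (v t) (w t) a b c) = fun t =>
        u t a * (v t b * w t c - v t c * w t b) - u t b * (v t a * w t c - v t c * w t a)
          + u t c * (v t a * w t b - v t b * w t a) from rfl, hv]
    exact h
  fin_cases i
  · convert (m 1 2 3).neg using 1
    all_goals first | rfl | (simp [trip]; try ring)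
  · convert (m 0 2 3) using 1
    all_goals first | rfl | (simp [trip]; try ring)
  · convert (m 0 1 3) using 1
    all_goals first | rfl | (simp [trip]; try ring)
  · convert (m 0 1 2).neg using 1
    all_goals first | rfl | (simp [trip]; try ring)


lemma ortho_frame_zero {g t a b v : R4} {d : ℝ} (hd : d = 1 ∨ d = -1)
    (hgg : pip g g = -1) (htt : pip t t = 1) (haa : pip a a = d) (hbb : pip b b = -d)
    (hgt : pip g t = 0) (hga : pip g a = 0) (hgb : pip g b = 0)
    (hta : pip t a = 0) (htb : pip t b = 0) (hab : pip a b = 0)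
    (hvg : pip v g = 0) (hvt : pip v t = 0) (hva : pip v a = 0) (hvb : pip v b = 0) :
    v = 0 := by
  have hd2 : d * d = 1 := by rcases hd with h | h <;> rw [h] <;> norm_num
  set M : Matrix (Fin 4) (Fin 4) ℝ := Matrix.of ![g, t, a, b] with hM
  set Q : Matrix (Fin 4) (Fin 4) ℝ :=
    Matrix.of ![![-1,0,0,0], ![0,-1,0,0], ![0,0,1,0], ![0,0,0,1]] with hQ
  set D : Matrix (Fin 4) (Fin 4) ℝ :=
    Matrix.of ![![-1,0,0,0], ![0,1,0,0], ![0,0,d,0], ![0,0,0,-d]] with hD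
  have hP : M * Q * M.transpose = D := by
    ext i j
    simp only [pip] at hgg htt haa hbb hgt hga hgb hta htb hab
    fin_cases i <;> fin_cases j <;>
      simp [hM, hQ, hD, Matrix.mul_apply, Fin.sum_univ_four,
        Matrix.transpose_apply, Matrix.vecHead, Matrix.vecTail,
        show Fin.succ (2 : Fin 3) = (3 : Fin 4) from rfl,
        show Fin.succ (1 : Fin 3) = (2 : Fin 4) from rfl,
        show Fin.succ (0 : Fin 3) = (1 : Fin 4) from rfl] <;>
      linarith [hgg, htt, haa, hbb, hgt, hga, hgb, hta, htb, hab,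
        sq_nonneg (g 0), sq_abs (g 0)]
  have hdetQ : Q.det = 1 := by
    simp [hQ, Matrix.det_succ_row_zero, Fin.sum_univ_succ]
  have hdetD : D.det = d * d := by
    simp [hD, Matrix.det_succ_row_zero, Fin.sum_univ_succ]
    try ring
  have hdetP : M.det * M.det = 1 := by
    have h1 := congrArg Matrix.det hP
    rw [Matrix.det_mul, Matrix.det_mul, Matrix.det_transpose, hdetQ, hdetD] at h1
    nlinarith [h1, hd2]
  have hdet : IsUnit M.det := by
    refine isUnit_iff_ne_zero.mpr fun h => ?_
    rw [h] at hdetP; norm_num at hdetP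
  have hinj : Function.Injective M.mulVec :=
    Matrix.mulVec_injective_iff_isUnit.mpr ((Matrix.isUnit_iff_isUnit_det M).mpr hdet)
  set x : R4 := ![-(v 0), -(v 1), v 2, v 3] with hx
  have hx0 : M.mulVec x = 0 := by
    simp only [pip] at hvg hvt hva hvb
    funext i
    fin_cases i <;>
      simp [hM, hx, Matrix.mulVec, dotProduct, Fin.sum_univ_four,
        Matrix.vecHead, Matrix.vecTail] <;>
      first
        | linear_combination hvg | linear_combination hvt
        | linear_combination hva | linear_combination hvb
  have : x = 0 := hinj (by rw [hx0, Matrix.mulVec_zero])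
  funext i
  fin_cases i
  · have := congrFun this 0
    simp [hx] at this; simpa using this
  · have := congrFun this 1
    simp [hx] at this; simpa using this
  · have := congrFun this 2
    simp [hx] at this; simpa using this
  · have := congrFun this 3
    simp [hx] at this; simpa using this

end FrenetAux

/-- Frenet–Serret type formulas for a unit-speed spacelike regular curve in AdS³. -/
theorem frenet_serret_regular_spacelike
    (I : Set ℝ) (hIopen : IsOpen I) (hIconn : I.OrdConnected)
    (γ : ℝ → R4) (hγ : ContDiffOn ℝ (⊤ : ℕ∞) γ I)
    (hads : ∀ s ∈ I, γ s ∈ AdS3)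
    (hunit : ∀ s ∈ I, pip (deriv γ s) (deriv γ s) = 1)
    (hnd : ∀ s ∈ I,
      pip (deriv (deriv γ) s - γ s) (deriv (deriv γ) s - γ s) ≠ 0)
    (T : ℝ → R4) (hT : T = deriv γ)
    (κ : ℝ → ℝ)
    (hκ : ∀ s, κ s = Real.sqrt |pip (deriv T s - γ s) (deriv T s - γ s)|)
    (n₁ n₂ : ℝ → R4)
    (hn₁ : ∀ s, n₁ s = (κ s)⁻¹ • (deriv T s - γ s))
    (hn₂ : ∀ s, n₂ s = trip (γ s) (T s) (n₁ s))
    (δ : ℝ → ℝ) (hδ : ∀ s, δ s = pip (n₁ s) (n₁ s))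
    (τ : ℝ → ℝ)
    (hτ : ∀ s, τ s = δ s / (κ s) ^ 2 *
      Matrix.det (Matrix.of
        ![γ s, deriv γ s, deriv (deriv γ) s, deriv (deriv (deriv γ)) s])) :
    ((∀ s ∈ I, δ s = 1) ∨ (∀ s ∈ I, δ s = -1)) ∧
    ∀ s ∈ I,
      deriv γ s = T s ∧
      deriv T s = γ s + κ s • n₁ s ∧
      deriv n₁ s = (-(δ s) * κ s) • T s + τ s • n₂ s ∧
      deriv n₂ s = τ s • n₁ s := by
  classical
  subst hT
  have hγ1 : ContDiffOn ℝ (⊤ : ℕ∞) (deriv γ) I := hγ.deriv_of_isOpen hIopen (by simp)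
  have hγ2 : ContDiffOn ℝ (⊤ : ℕ∞) (deriv (deriv γ)) I := hγ1.deriv_of_isOpen hIopen (by simp)
  have hγ3 : ContDiffOn ℝ (⊤ : ℕ∞) (deriv (deriv (deriv γ))) I := hγ2.deriv_of_isOpen hIopen (by simp)
  have hDD : ∀ (f : ℝ → R4), ContDiffOn ℝ (⊤ : ℕ∞) f I → ∀ s ∈ I, HasDerivAt f (deriv f s) s := by
    intro f hf s hs
    exact ((hf.differentiableOn (by simp)).differentiableAt (hIopen.mem_nhds hs)).hasDerivAt
  have hd1 : ∀ s ∈ I, HasDerivAt γ (deriv γ s) s := hDD γ hγ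
  have hd2 : ∀ s ∈ I, HasDerivAt (deriv γ) (deriv (deriv γ) s) s := hDD _ hγ1
  have hd3 : ∀ s ∈ I, HasDerivAt (deriv (deriv γ)) (deriv (deriv (deriv γ)) s) s := hDD _ hγ2
  have keyD : ∀ {f g : ℝ → R4} {f' g' : R4} {s : ℝ} {c : ℝ}, s ∈ I →
      HasDerivAt f f' s → HasDerivAt g g' s → (∀ t ∈ I, pip (f t) (g t) = c) →
      pip f' (g s) + pip (f s) g' = 0 := by
    intro f g f' g' s c hs hf hg hconst
    have h1 := FrenetAux.hasDerivAt_pip hf hg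
    have h2 : (fun t => pip (f t) (g t)) =ᶠ[nhds s] fun _ => c :=
      Filter.eventuallyEq_of_mem (hIopen.mem_nhds hs) hconst
    have h3 : HasDerivAt (fun t => pip (f t) (g t)) 0 s :=
      (hasDerivAt_const s c).congr_of_eventuallyEq h2
    exact h1.unique h3
  have hads' : ∀ t ∈ I, pip (γ t) (γ t) = -1 := fun t ht => hads t ht
  have h_tg : ∀ s ∈ I, pip (deriv γ s) (γ s) = 0 := by
    intro s hs
    have h := keyD hs (hd1 s hs) (hd1 s hs) hads'
    have hc := FrenetAux.pip_comm (deriv γ s) (γ s)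
    linarith [h, hc]
  have h_t't : ∀ s ∈ I, pip (deriv (deriv γ) s) (deriv γ s) = 0 := by
    intro s hs
    have h := keyD hs (hd2 s hs) (hd2 s hs) hunit
    have hc := FrenetAux.pip_comm (deriv (deriv γ) s) (deriv γ s)
    linarith [h, hc]
  have h_t'g : ∀ s ∈ I, pip (deriv (deriv γ) s) (γ s) = -1 := by
    intro s hs
    have h := keyD hs (hd2 s hs) (hd1 s hs) h_tg
    have hu := hunit s hs
    linarith [h, hu]
  have h_Ng : ∀ s ∈ I, pip (deriv (deriv γ) s - γ s) (γ s) = 0 := by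
    intro s hs
    rw [FrenetAux.pip_sub_left, h_t'g s hs, hads' s hs]
    ring
  have h_Nt : ∀ s ∈ I, pip (deriv (deriv γ) s - γ s) (deriv γ s) = 0 := by
    intro s hs
    rw [FrenetAux.pip_sub_left, h_t't s hs, FrenetAux.pip_comm (γ s) (deriv γ s), h_tg s hs]
    ring
  have hNcont : ContinuousOn (fun t => deriv (deriv γ) t - γ t) I :=
    (hγ2.continuousOn).sub (hγ.continuousOn)
  have hqcont : ContinuousOn
      (fun t => pip (deriv (deriv γ) t - γ t) (deriv (deriv γ) t - γ t)) I := by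
    have hc : ∀ i : Fin 4, ContinuousOn (fun t => (deriv (deriv γ) t - γ t) i) I :=
      fun i => (continuous_apply i).comp_continuousOn hNcont
    exact ((((hc 0).mul (hc 0)).neg.sub ((hc 1).mul (hc 1))).add ((hc 2).mul (hc 2))).add
      ((hc 3).mul (hc 3))
  have hdich : (∀ s ∈ I, 0 < pip (deriv (deriv γ) s - γ s) (deriv (deriv γ) s - γ s)) ∨
      (∀ s ∈ I, pip (deriv (deriv γ) s - γ s) (deriv (deriv γ) s - γ s) < 0) := by
    by_contra hcon
    push_neg at hcon
    obtain ⟨⟨s₁, hs₁, hq₁⟩, ⟨s₂, hs₂, hq₂⟩⟩ := hcon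
    have h1 : pip (deriv (deriv γ) s₁ - γ s₁) (deriv (deriv γ) s₁ - γ s₁) < 0 :=
      lt_of_le_of_ne hq₁ (hnd s₁ hs₁)
    have h2 : 0 < pip (deriv (deriv γ) s₂ - γ s₂) (deriv (deriv γ) s₂ - γ s₂) :=
      lt_of_le_of_ne hq₂ (Ne.symm (hnd s₂ hs₂))
    have hsub : Set.uIcc s₁ s₂ ⊆ I := hIconn.uIcc_subset hs₁ hs₂
    have hIVT := intermediate_value_uIcc (hqcont.mono hsub)
    have h0 : (0:ℝ) ∈ Set.uIcc (pip (deriv (deriv γ) s₁ - γ s₁) (deriv (deriv γ) s₁ - γ s₁))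
        (pip (deriv (deriv γ) s₂ - γ s₂) (deriv (deriv γ) s₂ - γ s₂)) :=
      Set.Icc_subset_uIcc ⟨le_of_lt h1, le_of_lt h2⟩
    obtain ⟨c, hc, hc0⟩ := hIVT h0
    exact hnd c (hsub hc) hc0
  obtain ⟨d0, hd0, habs⟩ : ∃ d0 : ℝ, (d0 = 1 ∨ d0 = -1) ∧ ∀ s ∈ I,
      |pip (deriv (deriv γ) s - γ s) (deriv (deriv γ) s - γ s)| =
        d0 * pip (deriv (deriv γ) s - γ s) (deriv (deriv γ) s - γ s) ∧
      0 < d0 * pip (deriv (deriv γ) s - γ s) (deriv (deriv γ) s - γ s) := by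
    rcases hdich with h | h
    · refine ⟨1, Or.inl rfl, fun s hs => ⟨?_, ?_⟩⟩
      · rw [abs_of_pos (h s hs)]; ring
      · simpa using h s hs
    · refine ⟨-1, Or.inr rfl, fun s hs => ⟨?_, ?_⟩⟩
      · rw [abs_of_neg (h s hs)]; ring
      · nlinarith [h s hs]
  have hd0sq : d0 * d0 = 1 := by rcases hd0 with h | h <;> rw [h] <;> norm_num
  have hκpos : ∀ s ∈ I, 0 < κ s := by
    intro s hs
    rw [hκ s]
    exact Real.sqrt_pos.mpr (abs_pos.mpr (hnd s hs))
  have hκsq : ∀ s ∈ I, κ s ^ 2 =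
      d0 * pip (deriv (deriv γ) s - γ s) (deriv (deriv γ) s - γ s) := by
    intro s hs
    rw [hκ s, Real.sq_sqrt (abs_nonneg _), (habs s hs).1]
  have hPval : ∀ s ∈ I, pip (deriv (deriv γ) s - γ s) (deriv (deriv γ) s - γ s) =
      d0 * κ s ^ 2 := by
    intro s hs
    have h := hκsq s hs
    linear_combination (-d0) * h -
      pip (deriv (deriv γ) s - γ s) (deriv (deriv γ) s - γ s) * hd0sq
  have hκN : ∀ s ∈ I, κ s • n₁ s = deriv (deriv γ) s - γ s := by
    intro s hs
    rw [hn₁ s, smul_smul, mul_inv_cancel₀ (ne_of_gt (hκpos s hs)), one_smul]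
  have hn₁g : ∀ s ∈ I, pip (n₁ s) (γ s) = 0 := by
    intro s hs
    rw [hn₁ s, FrenetAux.pip_smul_left, h_Ng s hs]; ring
  have hn₁t : ∀ s ∈ I, pip (n₁ s) (deriv γ s) = 0 := by
    intro s hs
    rw [hn₁ s, FrenetAux.pip_smul_left, h_Nt s hs]; ring
  have hn₁n₁ : ∀ s ∈ I, pip (n₁ s) (n₁ s) = d0 := by
    intro s hs
    have hκne := ne_of_gt (hκpos s hs)
    rw [hn₁ s, FrenetAux.pip_smul_left, FrenetAux.pip_smul_right, hPval s hs]
    have h2 : (κ s)⁻¹ * ((κ s)⁻¹ * (d0 * κ s ^ 2)) =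
        d0 * (((κ s)⁻¹ * κ s) * ((κ s)⁻¹ * κ s)) := by ring
    rw [h2, inv_mul_cancel₀ hκne]
    ring
  have hδ0 : ∀ s ∈ I, δ s = d0 := fun s hs => by rw [hδ s]; exact hn₁n₁ s hs
  have hn₂g : ∀ s ∈ I, pip (n₂ s) (γ s) = 0 := fun s hs => by
    rw [hn₂ s]; exact FrenetAux.pip_trip1 _ _ _
  have hn₂t : ∀ s ∈ I, pip (n₂ s) (deriv γ s) = 0 := fun s hs => by
    rw [hn₂ s]; exact FrenetAux.pip_trip2 _ _ _
  have hn₂n₁ : ∀ s ∈ I, pip (n₂ s) (n₁ s) = 0 := fun s hs => by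
    rw [hn₂ s]; exact FrenetAux.pip_trip3 _ _ _
  have hn₂n₂ : ∀ s ∈ I, pip (n₂ s) (n₂ s) = -d0 := by
    intro s hs
    have e2 : pip (γ s) (deriv γ s) = 0 := by
      rw [FrenetAux.pip_comm]; exact h_tg s hs
    have e3 : pip (γ s) (n₁ s) = 0 := by
      rw [FrenetAux.pip_comm]; exact hn₁g s hs
    have e5 : pip (deriv γ s) (n₁ s) = 0 := by
      rw [FrenetAux.pip_comm]; exact hn₁t s hs
    rw [hn₂ s, FrenetAux.pip_trip_lagrange, hads' s hs, e2, e3, hunit s hs, e5, hn₁n₁ s hs]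
    ring
  have hT'eq : ∀ s ∈ I, deriv (deriv γ) s = γ s + κ s • n₁ s := by
    intro s hs
    rw [hκN s hs]
    abel
  refine ⟨?_, ?_⟩
  · rcases hd0 with h | h
    · left; intro s hs; rw [hδ0 s hs, h]
    · right; intro s hs; rw [hδ0 s hs, h]
  intro s hs
  have hκne : κ s ≠ 0 := ne_of_gt (hκpos s hs)
  have hdN : HasDerivAt (fun t => deriv (deriv γ) t - γ t)
      (deriv (deriv (deriv γ)) s - deriv γ s) s := (hd3 s hs).sub (hd1 s hs)
  have hqd : HasDerivAt (fun t => pip (deriv (deriv γ) t - γ t) (deriv (deriv γ) t - γ t))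
      (pip (deriv (deriv (deriv γ)) s - deriv γ s) (deriv (deriv γ) s - γ s) +
        pip (deriv (deriv γ) s - γ s) (deriv (deriv (deriv γ)) s - deriv γ s)) s :=
    FrenetAux.hasDerivAt_pip hdN hdN
  have hev : κ =ᶠ[nhds s]
      fun t => Real.sqrt (d0 * pip (deriv (deriv γ) t - γ t) (deriv (deriv γ) t - γ t)) := by
    have hca : ContinuousAt
        (fun t => d0 * pip (deriv (deriv γ) t - γ t) (deriv (deriv γ) t - γ t)) s :=
      continuousAt_const.mul (hqcont.continuousAt (hIopen.mem_nhds hs))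
    have h1 : ∀ᶠ t in nhds s,
        0 < d0 * pip (deriv (deriv γ) t - γ t) (deriv (deriv γ) t - γ t) :=
      hca.eventually (eventually_gt_nhds (habs s hs).2)
    filter_upwards [h1] with t ht
    rw [hκ t]
    congr 1
    rcases hd0 with h | h
    · rw [h] at ht ⊢
      rw [abs_of_pos (by linarith), one_mul]
    · rw [h] at ht ⊢
      have hq : pip (deriv (deriv γ) t - γ t) (deriv (deriv γ) t - γ t) < 0 := by nlinarith
      rw [abs_of_neg hq]; ring
  have hκd : HasDerivAt κ
      ((d0 * (pip (deriv (deriv (deriv γ)) s - deriv γ s) (deriv (deriv γ) s - γ s) +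
        pip (deriv (deriv γ) s - γ s) (deriv (deriv (deriv γ)) s - deriv γ s))) /
        (2 * Real.sqrt (d0 * pip (deriv (deriv γ) s - γ s) (deriv (deriv γ) s - γ s)))) s := by
    have h := (hqd.const_mul d0).sqrt (ne_of_gt (habs s hs).2)
    exact h.congr_of_eventuallyEq hev
  have hκinv : HasDerivAt (fun t => (κ t)⁻¹)
      (-((d0 * (pip (deriv (deriv (deriv γ)) s - deriv γ s) (deriv (deriv γ) s - γ s) +
        pip (deriv (deriv γ) s - γ s) (deriv (deriv (deriv γ)) s - deriv γ s))) /
        (2 * Real.sqrt (d0 * pip (deriv (deriv γ) s - γ s) (deriv (deriv γ) s - γ s)))) /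
        κ s ^ 2) s := hκd.inv hκne
  set B : ℝ :=
    -((d0 * (pip (deriv (deriv (deriv γ)) s - deriv γ s) (deriv (deriv γ) s - γ s) +
      pip (deriv (deriv γ) s - γ s) (deriv (deriv (deriv γ)) s - deriv γ s))) /
      (2 * Real.sqrt (d0 * pip (deriv (deriv γ) s - γ s) (deriv (deriv γ) s - γ s)))) /
      κ s ^ 2 with hB
  obtain ⟨D₁, hD₁⟩ : ∃ D : R4, D = (κ s)⁻¹ • (deriv (deriv (deriv γ)) s - deriv γ s) +
      B • (deriv (deriv γ) s - γ s) := ⟨_, rfl⟩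
  have hn₁fun : n₁ = fun t => (κ t)⁻¹ • (deriv (deriv γ) t - γ t) := funext hn₁
  have hdn₁ : HasDerivAt n₁ D₁ s := by
    rw [hn₁fun, hD₁]
    exact hκinv.smul hdN
  have pipD₁g : pip D₁ (γ s) = 0 := by
    have h := keyD hs hdn₁ (hd1 s hs) hn₁g
    have h2 := hn₁t s hs
    linarith
  have pipD₁t : pip D₁ (deriv γ s) = -(d0 * κ s) := by
    have h := keyD hs hdn₁ (hd2 s hs) hn₁t
    have e : pip (n₁ s) (deriv (deriv γ) s) = κ s * d0 := by
      rw [hT'eq s hs, FrenetAux.pip_add_right, FrenetAux.pip_smul_right,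
        hn₁g s hs, hn₁n₁ s hs]
      ring
    linarith
  have pipD₁n₁ : pip D₁ (n₁ s) = 0 := by
    have h := keyD hs hdn₁ hdn₁ hn₁n₁
    have hc := FrenetAux.pip_comm D₁ (n₁ s)
    linarith
  have htr : n₂ s = (κ s)⁻¹ • trip (γ s) (deriv γ s) (deriv (deriv γ) s) := by
    rw [hn₂ s, hn₁ s, FrenetAux.trip_smul3, FrenetAux.trip_sub3, FrenetAux.trip_self13,
      sub_zero]
  have hdet : pip (trip (γ s) (deriv γ s) (deriv (deriv γ) s)) (deriv (deriv (deriv γ)) s) =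
      -(Matrix.det (Matrix.of
        ![γ s, deriv γ s, deriv (deriv γ) s, deriv (deriv (deriv γ)) s])) := by
    rw [FrenetAux.det_eq_neg_pip_trip]; ring
  have hn₂N : pip (n₂ s) (deriv (deriv γ) s - γ s) = 0 := by
    rw [← hκN s hs, FrenetAux.pip_smul_right, hn₂n₁ s hs]; ring
  have hn₂g3 : pip (n₂ s) (deriv (deriv (deriv γ)) s) =
      (κ s)⁻¹ * -(Matrix.det (Matrix.of
        ![γ s, deriv γ s, deriv (deriv γ) s, deriv (deriv (deriv γ)) s])) := by
    rw [htr, FrenetAux.pip_smul_left, hdet]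
  have pipD₁n₂ : pip D₁ (n₂ s) = -(d0 * τ s) := by
    have h1 : pip (n₂ s) D₁ =
        (κ s)⁻¹ * (pip (n₂ s) (deriv (deriv (deriv γ)) s) - pip (n₂ s) (deriv γ s)) +
          B * pip (n₂ s) (deriv (deriv γ) s - γ s) := by
      rw [hD₁, FrenetAux.pip_add_right, FrenetAux.pip_smul_right, FrenetAux.pip_smul_right,
        FrenetAux.pip_sub_right]
    rw [FrenetAux.pip_comm, h1, hn₂g3, hn₂t s hs, hn₂N, hτ s, hδ0 s hs]
    field_simp
    linear_combination
      ((Matrix.of ![γ s, deriv γ s, deriv (deriv γ) s, deriv (deriv (deriv γ)) s]).det) * hd0sq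
  have e_gt : pip (γ s) (deriv γ s) = 0 := by rw [FrenetAux.pip_comm]; exact h_tg s hs
  have e_ga : pip (γ s) (n₁ s) = 0 := by rw [FrenetAux.pip_comm]; exact hn₁g s hs
  have e_gb : pip (γ s) (n₂ s) = 0 := by rw [FrenetAux.pip_comm]; exact hn₂g s hs
  have e_ta : pip (deriv γ s) (n₁ s) = 0 := by rw [FrenetAux.pip_comm]; exact hn₁t s hs
  have e_tb : pip (deriv γ s) (n₂ s) = 0 := by rw [FrenetAux.pip_comm]; exact hn₂t s hs
  have e_ab : pip (n₁ s) (n₂ s) = 0 := by rw [FrenetAux.pip_comm]; exact hn₂n₁ s hs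
  have hzero : D₁ - ((-(δ s) * κ s) • deriv γ s + τ s • n₂ s) = 0 := by
    apply FrenetAux.ortho_frame_zero hd0 (hads' s hs) (hunit s hs) (hn₁n₁ s hs)
      (hn₂n₂ s hs) e_gt e_ga e_gb e_ta e_tb e_ab
    · rw [FrenetAux.pip_sub_left, FrenetAux.pip_add_left, FrenetAux.pip_smul_left,
        FrenetAux.pip_smul_left, pipD₁g, h_tg s hs, hn₂g s hs]
      ring
    · rw [FrenetAux.pip_sub_left, FrenetAux.pip_add_left, FrenetAux.pip_smul_left,
        FrenetAux.pip_smul_left, pipD₁t, hunit s hs, hn₂t s hs, hδ0 s hs]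
      ring
    · rw [FrenetAux.pip_sub_left, FrenetAux.pip_add_left, FrenetAux.pip_smul_left,
        FrenetAux.pip_smul_left, pipD₁n₁, e_ta, hn₂n₁ s hs]
      ring
    · rw [FrenetAux.pip_sub_left, FrenetAux.pip_add_left, FrenetAux.pip_smul_left,
        FrenetAux.pip_smul_left, pipD₁n₂, e_tb, hn₂n₂ s hs, hδ0 s hs]
      ring
  have hD₁eq : D₁ = (-(δ s) * κ s) • deriv γ s + τ s • n₂ s := sub_eq_zero.mp hzero
  have hn₂fun : n₂ = fun t => trip (γ t) (deriv γ t) (n₁ t) := funext hn₂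
  have hdn₂ : HasDerivAt n₂
      (trip (deriv γ s) (deriv γ s) (n₁ s) + trip (γ s) (deriv (deriv γ) s) (n₁ s) +
        trip (γ s) (deriv γ s) D₁) s := by
    rw [hn₂fun]
    exact FrenetAux.hasDerivAt_trip (hd1 s hs) (hd2 s hs) hdn₁
  have key : trip (γ s) (deriv γ s) (n₂ s) = n₁ s := by
    have hz : trip (γ s) (deriv γ s) (n₂ s) - n₁ s = 0 := by
      apply FrenetAux.ortho_frame_zero hd0 (hads' s hs) (hunit s hs) (hn₁n₁ s hs)
        (hn₂n₂ s hs) e_gt e_ga e_gb e_ta e_tb e_ab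
      · rw [FrenetAux.pip_sub_left, FrenetAux.pip_trip1, hn₁g s hs]; ring
      · rw [FrenetAux.pip_sub_left, FrenetAux.pip_trip2, hn₁t s hs]; ring
      · rw [FrenetAux.pip_sub_left, FrenetAux.pip_trip_swap]
        rw [← hn₂ s, hn₂n₂ s hs, hn₁n₁ s hs]
        ring
      · rw [FrenetAux.pip_sub_left, FrenetAux.pip_trip3, e_ab]; ring
    exact sub_eq_zero.mp hz
  have hterm2 : trip (γ s) (deriv (deriv γ) s) (n₁ s) = 0 := by
    rw [hT'eq s hs, FrenetAux.trip_add2, FrenetAux.trip_smul2, FrenetAux.trip_self12,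
      FrenetAux.trip_self23]
    simp
  have hterm3 : trip (γ s) (deriv γ s) D₁ = τ s • n₁ s := by
    rw [hD₁eq, FrenetAux.trip_add3, FrenetAux.trip_smul3, FrenetAux.trip_smul3,
      FrenetAux.trip_self23, key]
    simp
  refine ⟨rfl, hT'eq s hs, ?_, ?_⟩
  · rw [hdn₁.deriv]
    exact hD₁eq
  · rw [hdn₂.deriv, FrenetAux.trip_self12, hterm2, hterm3]
    simp
end
end

section
/- Let (γ,v₁,v₂) be a pseudo-spherical spacelike framed curve on I with ⟨v₁,v₁⟩ = ε ∈ {1,−1}, curvature (α,ℓ,m,n), and μ = γ×v₁×v₂. Then {γ(s), v₁(s), v₂(s), μ(s)} is a pseudo-orthonormal frame for every s (in particular ⟨μ(s),μ(s)⟩ = 1 and ⟨μ(s),γ(s)⟩ = ⟨μ(s),v₁(s)⟩ = ⟨μ(s),v₂(s)⟩ = 0), and for all s ∈ I the Frenet–Serret type formulas hold: γ′(s) = α(s)μ(s), v₁′(s) = ℓ(s)v₂(s) + m(s)μ(s), v₂′(s) = ℓ(s)v₁(s) + n(s)μ(s), and μ′(s) = α(s)γ(s) − εm(s)v₁(s)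 + εn(s)v₂(s). Moreover, γ′(s₀) = 0 if and only if α(s₀) = 0. -/
noncomputable section

lemma pip_comm (u w : R4) : pip u w = pip w u := by unfold pip; ring

lemma trip_orth_u (u v w : R4) : pip (trip u v w) u = 0 := by
  simp [pip, trip, minor3]; ring

lemma trip_orth_v (u v w : R4) : pip (trip u v w) v = 0 := by
  simp [pip, trip, minor3]; ring

lemma trip_orth_w (u v w : R4) : pip (trip u v w) w = 0 := by
  simp [pip, trip, minor3]; ring

lemma trip_gram (u v w : R4) :
    pip (trip u v w) (trip u v w) =
      pip u u * (pip v v * pip w w - pip v w * pip v w)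
      - pip u v * (pip u v * pip w w - pip v w * pip u w)
      + pip u w * (pip u v * pip v w - pip v v * pip u w) := by
  simp [pip, trip, minor3]; ring


open Matrix in
lemma zero_of_orth (u v w y : R4) (ε : ℝ) (hε : ε * ε = 1)
    (huu : pip u u = -1) (hvv : pip v v = ε) (hww : pip w w = -ε)
    (huv : pip u v = 0) (huw : pip u w = 0) (hvw : pip v w = 0)
    (h0 : pip u y = 0) (h1 : pip v y = 0) (h2 : pip w y = 0)
    (h3 : pip (trip u v w) y = 0) : y = 0 := by
  have hg : pip (trip u v w) (trip u v w) = 1 := by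
    rw [trip_gram, huu, hvv, hww, huv, huw, hvw]; linear_combination hε
  set μ := trip u v w with hμdef
  funext i
  fin_cases i
  · show y 0 = 0
    linear_combination (norm := (simp only [pip, trip, minor3, Matrix.cons_val_zero,
        Matrix.cons_val_one, Matrix.head_cons, Matrix.cons_val_two, Matrix.tail_cons,
        Matrix.cons_val_three, hμdef]; ring1))
      (-(y 0)) * hg + (minor3 v w μ 1 2 3) * h0 - (minor3 u w μ 1 2 3) * h1
        + (minor3 u v μ 1 2 3) * h2 - (minor3 u v w 1 2 3) * h3
  · show y 1 = 0
    linear_combination (norm := (simp only [pip, trip, minor3, Matrix.cons_val_zero,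
        Matrix.cons_val_one, Matrix.head_cons, Matrix.cons_val_two, Matrix.tail_cons,
        Matrix.cons_val_three, hμdef]; ring1))
      (-(y 1)) * hg - (minor3 v w μ 0 2 3) * h0 + (minor3 u w μ 0 2 3) * h1
        - (minor3 u v μ 0 2 3) * h2 + (minor3 u v w 0 2 3) * h3
  · show y 2 = 0
    linear_combination (norm := (simp only [pip, trip, minor3, Matrix.cons_val_zero,
        Matrix.cons_val_one, Matrix.head_cons, Matrix.cons_val_two, Matrix.tail_cons,
        Matrix.cons_val_three, hμdef]; ring1))
      (-(y 2)) * hg - ((minor3 v w μ 0 1 3) * h0 - (minor3 u w μ 0 1 3) * h1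
        + (minor3 u v μ 0 1 3) * h2 - (minor3 u v w 0 1 3) * h3)
  · show y 3 = 0
    linear_combination (norm := (simp only [pip, trip, minor3, Matrix.cons_val_zero,
        Matrix.cons_val_one, Matrix.head_cons, Matrix.cons_val_two, Matrix.tail_cons,
        Matrix.cons_val_three, hμdef]; ring1))
      (-(y 3)) * hg - (-(minor3 v w μ 0 1 2) * h0 + (minor3 u w μ 0 1 2) * h1
        - (minor3 u v μ 0 1 2) * h2 + (minor3 u v w 0 1 2) * h3)

lemma expand_frame (u v w : R4) (ε : ℝ) (hε : ε * ε = 1)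
    (huu : pip u u = -1) (hvv : pip v v = ε) (hww : pip w w = -ε)
    (huv : pip u v = 0) (huw : pip u w = 0) (hvw : pip v w = 0) (x : R4) :
    x = (-(pip x u)) • u + (ε * pip x v) • v + (-(ε * pip x w)) • w
        + (pip x (trip u v w)) • trip u v w := by
  have hg : pip (trip u v w) (trip u v w) = 1 := by
    rw [trip_gram, huu, hvv, hww, huv, huw, hvw]; linear_combination hε
  set μ := trip u v w with hμdef
  have key : ∀ a : R4, pip a
      ((-(pip x u)) • u + (ε * pip x v) • v + (-(ε * pip x w)) • w + (pip x μ) • μ - x)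
      = (-(pip x u)) * pip a u + (ε * pip x v) * pip a v + (-(ε * pip x w)) * pip a w
        + (pip x μ) * pip a μ - pip a x := by
    intro a; simp only [pip, Pi.add_apply, Pi.sub_apply, Pi.smul_apply, smul_eq_mul]; ring
  have h0 := key u
  have h1 := key v
  have h2 := key w
  have h3 := key μ
  rw [huu, huv, huw, pip_comm u μ, trip_orth_u, pip_comm u x] at h0
  rw [pip_comm v u, huv, hvv, hvw, pip_comm v μ, trip_orth_v, pip_comm v x] at h1
  rw [pip_comm w u, huw, pip_comm w v, hvw, hww, pip_comm w μ, trip_orth_w, pip_comm w x] at h2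
  rw [trip_orth_u, trip_orth_v, trip_orth_w, hg, pip_comm μ x] at h3
  have hz := zero_of_orth u v w
    ((-(pip x u)) • u + (ε * pip x v) • v + (-(ε * pip x w)) • w + (pip x μ) • μ - x)
    ε hε huu hvv hww huv huw hvw
    (by rw [h0]; ring) (by rw [h1]; linear_combination (pip x v) * hε)
    (by rw [h2]; linear_combination (pip x w) * hε) (by rw [h3]; ring)
  have := sub_eq_zero.mp hz
  exact this.symm

lemma hasDerivAt_pip2 {f g : ℝ → R4} {f' g' : R4} {s : ℝ}
    (hf : HasDerivAt f f' s) (hg : HasDerivAt g g' s) :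
    HasDerivAt (fun t => pip (f t) (g t)) (pip f' (g s) + pip (f s) g') s := by
  have Ff : ∀ i, HasDerivAt (fun t => f t i) (f' i) s := fun i => hasDerivAt_pi.1 hf i
  have Gg : ∀ i, HasDerivAt (fun t => g t i) (g' i) s := fun i => hasDerivAt_pi.1 hg i
  have H := ((((((Ff 0).mul (Gg 0)).neg).sub ((Ff 1).mul (Gg 1))).add
      ((Ff 2).mul (Gg 2))).add ((Ff 3).mul (Gg 3)))
  simp only [pip]
  exact H.congr_deriv (by ring)

lemma hasDerivAt_minor3 {f g h : ℝ → R4} {f' g' h' : R4} {s : ℝ}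
    (hf : HasDerivAt f f' s) (hg : HasDerivAt g g' s) (hh : HasDerivAt h h' s)
    (a b c : Fin 4) :
    HasDerivAt (fun t => minor3 (f t) (g t) (h t) a b c)
      (minor3 f' (g s) (h s) a b c + minor3 (f s) g' (h s) a b c
        + minor3 (f s) (g s) h' a b c) s := by
  have Ff : ∀ i, HasDerivAt (fun t => f t i) (f' i) s := fun i => hasDerivAt_pi.1 hf i
  have Gg : ∀ i, HasDerivAt (fun t => g t i) (g' i) s := fun i => hasDerivAt_pi.1 hg i
  have Hh : ∀ i, HasDerivAt (fun t => h t i) (h' i) s := fun i => hasDerivAt_pi.1 hh i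
  have H := ((((Ff a).mul (((Gg b).mul (Hh c)).sub ((Gg c).mul (Hh b)))).sub
      ((Ff b).mul (((Gg a).mul (Hh c)).sub ((Gg c).mul (Hh a))))).add
      ((Ff c).mul (((Gg a).mul (Hh b)).sub ((Gg b).mul (Hh a)))))
  simp only [minor3]
  exact H.congr_deriv (by simp only [Pi.mul_apply, Pi.sub_apply]; ring)

lemma hasDerivAt_trip3 {f g h : ℝ → R4} {f' g' h' : R4} {s : ℝ}
    (hf : HasDerivAt f f' s) (hg : HasDerivAt g g' s) (hh : HasDerivAt h h' s) :
    HasDerivAt (fun t => trip (f t) (g t) (h t))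
      (trip f' (g s) (h s) + trip (f s) g' (h s) + trip (f s) (g s) h') s := by
  rw [hasDerivAt_pi]
  intro i
  fin_cases i
  · exact (hasDerivAt_minor3 hf hg hh 1 2 3).neg.congr_deriv (by simp [trip]; ring)
  · exact (hasDerivAt_minor3 hf hg hh 0 2 3).congr_deriv (by simp [trip])
  · exact (hasDerivAt_minor3 hf hg hh 0 1 3).congr_deriv (by simp [trip])
  · exact (hasDerivAt_minor3 hf hg hh 0 1 2).neg.congr_deriv (by simp [trip]; ring)

lemma pip_deriv_eq_zero {I : Set ℝ} (hI : IsOpen I) {s : ℝ} (hs : s ∈ I)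
    {f g : ℝ → R4} {f' g' : R4} (hf : HasDerivAt f f' s) (hg : HasDerivAt g g' s)
    {c : ℝ} (hc : ∀ t ∈ I, pip (f t) (g t) = c) :
    pip f' (g s) + pip (f s) g' = 0 := by
  have H := hasDerivAt_pip2 hf hg
  have hev : (fun t => pip (f t) (g t)) =ᶠ[nhds s] (fun _ => c) :=
    Filter.eventually_of_mem (hI.mem_nhds hs) (fun t ht => hc t ht)
  have H2 : HasDerivAt (fun t => pip (f t) (g t)) 0 s :=
    (hasDerivAt_const s c).congr_of_eventuallyEq hev
  exact H.unique H2

/-- The moving frame of a pseudo-spherical spacelike framed curve is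
pseudo-orthonormal, the Frenet–Serret type formulas hold, and γ is singular at
s₀ iff α(s₀) = 0. -/
theorem frenet_serret_framed
    (I : Set ℝ) (hIopen : IsOpen I) (hIconn : I.OrdConnected)
    (γ v₁ v₂ : ℝ → R4) (ε : ℝ) (h : IsFramedCurve I γ v₁ v₂ ε)
    (μ : ℝ → R4) (hμ : ∀ s, μ s = muF γ v₁ v₂ s)
    (α l m n : ℝ → ℝ)
    (hα : ∀ s, α s = curvA γ v₁ v₂ s) (hl : ∀ s, l s = curvL ε v₁ v₂ s)
    (hm : ∀ s, m s = curvM γ v₁ v₂ s) (hn : ∀ s, n s = curvN γ v₁ v₂ s) :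
    (∀ s ∈ I,
      pip (μ s) (μ s) = 1 ∧ pip (μ s) (γ s) = 0 ∧
      pip (μ s) (v₁ s) = 0 ∧ pip (μ s) (v₂ s) = 0 ∧
      deriv γ s = α s • μ s ∧
      deriv v₁ s = l s • v₂ s + m s • μ s ∧
      deriv v₂ s = l s • v₁ s + n s • μ s ∧
      deriv μ s = α s • γ s + (-(ε * m s)) • v₁ s + (ε * n s) • v₂ s) ∧
    (∀ s₀ ∈ I, deriv γ s₀ = 0 ↔ α s₀ = 0) := by
  have hε : ε * ε = 1 := by rcases h.eps with h1 | h1 <;> rw [h1] <;> norm_num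
  have hμfun : μ = fun t => trip (γ t) (v₁ t) (v₂ t) := funext hμ
  -- pointwise orthogonality of μ (valid ∀ t)
  have P2 : ∀ t, pip (μ t) (γ t) = 0 := fun t => by rw [hμ t]; exact trip_orth_u _ _ _
  have P3 : ∀ t, pip (μ t) (v₁ t) = 0 := fun t => by rw [hμ t]; exact trip_orth_v _ _ _
  have P4 : ∀ t, pip (μ t) (v₂ t) = 0 := fun t => by rw [hμ t]; exact trip_orth_w _ _ _
  have P1 : ∀ t ∈ I, pip (μ t) (μ t) = 1 := by
    intro t ht
    have pγγ : pip (γ t) (γ t) = -1 := h.mem_ads t ht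
    rw [hμ t]
    show pip (trip (γ t) (v₁ t) (v₂ t)) (trip (γ t) (v₁ t) (v₂ t)) = 1
    rw [trip_gram, pγγ, h.norm_v₁ t ht, h.norm_v₂ t ht, h.orth_v₁v₂ t ht,
      h.orth_γv₁ t ht, h.orth_γv₂ t ht]
    linear_combination hε
  have main : ∀ s ∈ I,
      pip (μ s) (μ s) = 1 ∧ pip (μ s) (γ s) = 0 ∧
      pip (μ s) (v₁ s) = 0 ∧ pip (μ s) (v₂ s) = 0 ∧
      deriv γ s = α s • μ s ∧
      deriv v₁ s = l s • v₂ s + m s • μ s ∧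
      deriv v₂ s = l s • v₁ s + n s • μ s ∧
      deriv μ s = α s • γ s + (-(ε * m s)) • v₁ s + (ε * n s) • v₂ s := by
    intro s hs
    have dγ : HasDerivAt γ (deriv γ s) s :=
      ((h.smooth_γ.contDiffAt (hIopen.mem_nhds hs)).differentiableAt (by simp)).hasDerivAt
    have dv₁ : HasDerivAt v₁ (deriv v₁ s) s :=
      ((h.smooth_v₁.contDiffAt (hIopen.mem_nhds hs)).differentiableAt (by simp)).hasDerivAt
    have dv₂ : HasDerivAt v₂ (deriv v₂ s) s :=
      ((h.smooth_v₂.contDiffAt (hIopen.mem_nhds hs)).differentiableAt (by simp)).hasDerivAt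
    set μ' := trip (deriv γ s) (v₁ s) (v₂ s) + trip (γ s) (deriv v₁ s) (v₂ s)
      + trip (γ s) (v₁ s) (deriv v₂ s) with hμ'def
    have dμ : HasDerivAt μ μ' s := by
      rw [hμfun]; exact hasDerivAt_trip3 dγ dv₁ dv₂
    have hμs : μ s = trip (γ s) (v₁ s) (v₂ s) := hμ s
    have pγγ : pip (γ s) (γ s) = -1 := h.mem_ads s hs
    -- derivative pairings
    have pγ'γ : pip (deriv γ s) (γ s) = 0 := by
      have e := pip_deriv_eq_zero hIopen hs dγ dγ (fun t ht => h.mem_ads t ht)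
      rw [pip_comm (γ s)] at e; linarith
    have pγv₁' : pip (γ s) (deriv v₁ s) = 0 := by
      have e := pip_deriv_eq_zero hIopen hs dγ dv₁ (fun t ht => h.orth_γv₁ t ht)
      have := h.tang_v₁ s hs; linarith
    have pv₁'γ : pip (deriv v₁ s) (γ s) = 0 := by rw [pip_comm]; exact pγv₁'
    have pγv₂' : pip (γ s) (deriv v₂ s) = 0 := by
      have e := pip_deriv_eq_zero hIopen hs dγ dv₂ (fun t ht => h.orth_γv₂ t ht)
      have := h.tang_v₂ s hs; linarith
    have pv₂'γ : pip (deriv v₂ s) (γ s) = 0 := by rw [pip_comm]; exact pγv₂'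
    have pv₁'v₁ : pip (deriv v₁ s) (v₁ s) = 0 := by
      have e := pip_deriv_eq_zero hIopen hs dv₁ dv₁ (fun t ht => h.norm_v₁ t ht)
      rw [pip_comm (v₁ s)] at e; linarith
    have pv₂'v₂ : pip (deriv v₂ s) (v₂ s) = 0 := by
      have e := pip_deriv_eq_zero hIopen hs dv₂ dv₂ (fun t ht => h.norm_v₂ t ht)
      rw [pip_comm (v₂ s)] at e; linarith
    have pv₂'v₁ : pip (deriv v₂ s) (v₁ s) = -(pip (deriv v₁ s) (v₂ s)) := by
      have e := pip_deriv_eq_zero hIopen hs dv₁ dv₂ (fun t ht => h.orth_v₁v₂ t ht)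
      rw [pip_comm (v₁ s)] at e; linarith
    -- curvature abbreviations
    have hαs : α s = pip (deriv γ s) (μ s) := by
      rw [hα s]; show pip (deriv γ s) (muF γ v₁ v₂ s) = _; rw [← hμ s]
    have hls : l s = -ε * pip (deriv v₁ s) (v₂ s) := by rw [hl s]; rfl
    have hms : m s = pip (deriv v₁ s) (μ s) := by
      rw [hm s]; show pip (deriv v₁ s) (muF γ v₁ v₂ s) = _; rw [← hμ s]
    have hns : n s = pip (deriv v₂ s) (μ s) := by
      rw [hn s]; show pip (deriv v₂ s) (muF γ v₁ v₂ s) = _; rw [← hμ s]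
    -- pairings of μ'
    have pμ'γ : pip μ' (γ s) = -(α s) := by
      have e := pip_deriv_eq_zero hIopen hs dμ dγ (fun t ht => P2 t)
      rw [pip_comm (μ s)] at e; rw [hαs]; linarith
    have pμ'v₁ : pip μ' (v₁ s) = -(m s) := by
      have e := pip_deriv_eq_zero hIopen hs dμ dv₁ (fun t ht => P3 t)
      rw [pip_comm (μ s)] at e; rw [hms]; linarith
    have pμ'v₂ : pip μ' (v₂ s) = -(n s) := by
      have e := pip_deriv_eq_zero hIopen hs dμ dv₂ (fun t ht => P4 t)
      rw [pip_comm (μ s)] at e; rw [hns]; linarith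
    have pμ'μ : pip μ' (μ s) = 0 := by
      have e := pip_deriv_eq_zero hIopen hs dμ dμ P1
      rw [pip_comm (μ s)] at e; linarith
    refine ⟨P1 s hs, P2 s, P3 s, P4 s, ?_, ?_, ?_, ?_⟩
    · have hexp := expand_frame (γ s) (v₁ s) (v₂ s) ε hε pγγ (h.norm_v₁ s hs)
        (h.norm_v₂ s hs) (h.orth_γv₁ s hs) (h.orth_γv₂ s hs) (h.orth_v₁v₂ s hs)
        (deriv γ s)
      rw [← hμs, pγ'γ, h.tang_v₁ s hs, h.tang_v₂ s hs, ← hαs] at hexp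
      rw [hexp]; match_scalars <;> ring
    · have hexp := expand_frame (γ s) (v₁ s) (v₂ s) ε hε pγγ (h.norm_v₁ s hs)
        (h.norm_v₂ s hs) (h.orth_γv₁ s hs) (h.orth_γv₂ s hs) (h.orth_v₁v₂ s hs)
        (deriv v₁ s)
      rw [← hμs, pv₁'γ, pv₁'v₁, ← hms] at hexp
      rw [hexp, hls]; match_scalars <;> ring
    · have hexp := expand_frame (γ s) (v₁ s) (v₂ s) ε hε pγγ (h.norm_v₁ s hs)
        (h.norm_v₂ s hs) (h.orth_γv₁ s hs) (h.orth_γv₂ s hs) (h.orth_v₁v₂ s hs)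
        (deriv v₂ s)
      rw [← hμs, pv₂'γ, pv₂'v₂, pv₂'v₁, ← hns] at hexp
      rw [hexp, hls]; match_scalars <;> ring
    · have hexp := expand_frame (γ s) (v₁ s) (v₂ s) ε hε pγγ (h.norm_v₁ s hs)
        (h.norm_v₂ s hs) (h.orth_γv₁ s hs) (h.orth_γv₂ s hs) (h.orth_v₁v₂ s hs) μ'
      rw [← hμs, pμ'γ, pμ'v₁, pμ'v₂, pμ'μ] at hexp
      rw [dμ.deriv, hexp]; match_scalars <;> ring
  refine ⟨main, ?_⟩
  intro s₀ hs₀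
  constructor
  · intro hz
    rw [hα s₀]
    show pip (deriv γ s₀) (muF γ v₁ v₂ s₀) = 0
    rw [hz]
    simp [pip]
  · intro ha
    have := (main s₀ hs₀).2.2.2.2.1
    rw [this, ha, zero_smul]
end
end
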